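/- For p ≥ 1, define M_p(θ) = (2 - 2cos θ)^{p+1} ∑_{j∈ℤ} (θ + 2jπ)^{-2(p+1)} for θ ∈ (-π,π]∖{0}. Then lim_{θ→0} M_p(θ) = 1 and M_p(π) = 2(2^{2(p+1)} - 1) ζ(2(p+1))/π^{2(p+1)}. -/

import Mathlib

open Real Filter Topology

/-- The Riemann zeta function for real `s > 1`, `ζ(s) = ∑_{n ≥ 1} n^{-s}`. -/
noncomputable def zetaR (s : ℝ) : ℝ := ∑' n : ℕ, 1 / (n + 1 : ℝ) ^ s

/-- The IgA mass symbol `M_p(θ) = (2 - 2cos θ)^{p+1} ∑_{j∈ℤ} (θ + 2jπ)^{-2(p+1)}`. -/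
noncomputable def Mp (p : ℕ) (θ : ℝ) : ℝ :=
  (2 - 2 * Real.cos θ) ^ (p + 1) * ∑' j : ℤ, 1 / (θ + 2 * j * π) ^ (2 * (p + 1))

/-!
Since `2 - 2 cos θ = (2 sin (θ/2))²`, `M_p(θ) = ∑_j (2 sin (θ/2) / (θ + 2jπ))^{2(p+1)}`.
As `θ → 0` the `j = 0` term tends to `1` and all others to `0`; for `|θ| ≤ π` the `j`-th term
is at most `|j|^{-2(p+1)}`, so dominated convergence gives the limit. At `θ = π` the sum runs
over the odd integers, and removing the even terms from `ζ` produces the factor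
`1 - 2^{-2(p+1)}`.
-/

lemma two_sub_two_mul_cos (θ : ℝ) : 2 - 2 * cos θ = (2 * sin (θ / 2)) ^ 2 := by
  nth_rewrite 1 [← mul_div_cancel₀ θ two_ne_zero]
  rw [cos_two_mul, cos_sq']
  ring

lemma Mp_eq_tsum_pow (p : ℕ) (θ : ℝ) :
    Mp p θ = ∑' j : ℤ, (2 * sin (θ / 2) / (θ + 2 * j * π)) ^ (2 * (p + 1)) := by
  simp only [Mp, two_sub_two_mul_cos, ← pow_mul, ← tsum_mul_left, div_pow, mul_one_div]

lemma abs_int_mul_pi_le_abs_add_two_int_mul_pi {θ : ℝ} (hθ : |θ| ≤ π) (j : ℤ) :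
    |(j : ℝ)| * π ≤ |θ + 2 * j * π| := by
  rcases eq_or_ne j 0 with rfl | hj
  · simp
  have hj1 : (1 : ℝ) ≤ |(j : ℝ)| := by exact_mod_cast Int.one_le_abs hj
  calc |(j : ℝ)| * π ≤ |2 * j * π| - |θ| := by
        rw [abs_mul, abs_mul, abs_two, abs_of_pos pi_pos]; nlinarith [pi_pos]
    _ ≤ |θ + 2 * j * π| := by
        have := abs_sub_abs_le_abs_sub (2 * j * π) (-θ)
        rw [abs_neg, sub_neg_eq_add, add_comm] at this
        exact this

lemma abs_two_mul_sin_half_le (θ : ℝ) : |2 * sin (θ / 2)| ≤ |θ| := by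
  have := abs_sin_le_abs (x := θ / 2)
  rw [abs_mul, abs_two, abs_div, abs_two] at *
  linarith

lemma abs_two_mul_sin_half_div_le_inv {θ : ℝ} (hθ : |θ| ≤ π) {j : ℤ} (hj : j ≠ 0) :
    |2 * sin (θ / 2) / (θ + 2 * j * π)| ≤ |(j : ℝ)|⁻¹ := by
  have hj' : 0 < |(j : ℝ)| := by positivity
  have h_den := abs_int_mul_pi_le_abs_add_two_int_mul_pi hθ j
  rw [abs_div, div_le_iff₀ (by nlinarith [pi_pos])]
  calc |2 * sin (θ / 2)| ≤ |(j : ℝ)|⁻¹ * (|(j : ℝ)| * π) := by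
        rw [inv_mul_cancel_left₀ hj'.ne']; exact (abs_two_mul_sin_half_le θ).trans hθ
    _ ≤ |(j : ℝ)|⁻¹ * |θ + 2 * j * π| := by gcongr

lemma abs_two_mul_sin_half_div_self_le_one (θ : ℝ) : |2 * sin (θ / 2) / θ| ≤ 1 := by
  rw [abs_div]
  exact div_le_one_of_le₀ (abs_two_mul_sin_half_le θ) (abs_nonneg θ)

lemma tendsto_two_mul_sin_half_div_self :
    Tendsto (fun θ => 2 * sin (θ / 2) / θ) (𝓝[≠] 0) (𝓝 1) := by
  have h : Tendsto (fun θ => sinc (θ / 2)) (𝓝[≠] 0) (𝓝 1) := by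
    have : Continuous fun θ : ℝ => sinc (θ / 2) := by fun_prop
    simpa using (this.tendsto 0).mono_left nhdsWithin_le_nhds
  refine h.congr' ?_
  filter_upwards [self_mem_nhdsWithin] with θ hθ
  rw [sinc_of_ne_zero (div_ne_zero hθ two_ne_zero)]
  field_simp

lemma tendsto_tsum_two_mul_sin_half_div_pow {m : ℕ} (hm : 1 < m) :
    Tendsto (fun θ => ∑' j : ℤ, (2 * sin (θ / 2) / (θ + 2 * j * π)) ^ m)
      (𝓝[≠] 0) (𝓝 1) := by
  have h_sum : Summable (Function.update (fun j : ℤ => |(j : ℝ)|⁻¹ ^ m) 0 1) := by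
    refine Summable.update ?_ 0 1
    simpa [abs_pow] using (summable_one_div_int_pow.mpr hm).abs
  have h_lim (j : ℤ) : Tendsto (fun θ => (2 * sin (θ / 2) / (θ + 2 * j * π)) ^ m)
      (𝓝[≠] 0) (𝓝 ((Pi.single 0 1 : ℤ → ℝ) j)) := by
    rcases eq_or_ne j 0 with rfl | hj
    · simpa using tendsto_two_mul_sin_half_div_self.pow m
    · have hcont : ContinuousAt (fun θ => (2 * sin (θ / 2) / (θ + 2 * j * π)) ^ m) 0 :=
        ((by fun_prop : ContinuousAt (fun θ => 2 * sin (θ / 2)) 0).div (by fun_prop)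
          (by simp [hj, pi_ne_zero])).pow m
      simpa [hj, zero_pow (by omega : m ≠ 0)] using hcont.tendsto.mono_left nhdsWithin_le_nhds
  have h_bound : ∀ᶠ θ in 𝓝[≠] 0, ∀ j : ℤ,
      ‖(2 * sin (θ / 2) / (θ + 2 * j * π)) ^ m‖ ≤
        Function.update (fun j : ℤ => |(j : ℝ)|⁻¹ ^ m) 0 1 j := by
    have h_small : ∀ᶠ θ : ℝ in 𝓝 0, |θ| ≤ π := by
      filter_upwards [Metric.closedBall_mem_nhds (0 : ℝ) pi_pos] with θ hθ
      simpa using hθ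
    filter_upwards [nhdsWithin_le_nhds h_small] with θ hθ j
    rw [norm_pow, Real.norm_eq_abs]
    rcases eq_or_ne j 0 with rfl | hj
    · simpa using pow_le_one₀ (abs_nonneg _) (abs_two_mul_sin_half_div_self_le_one θ)
    · rw [Function.update_of_ne hj]
      exact pow_le_pow_left₀ (abs_nonneg _) (abs_two_mul_sin_half_div_le_inv hθ hj) m
  simpa using tendsto_tsum_of_dominated_convergence h_sum h_lim h_bound

lemma zetaR_natCast (m : ℕ) : zetaR m = ∑' n : ℕ, 1 / ((n : ℝ) + 1) ^ m := by
  simp only [zetaR, rpow_natCast]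

lemma summable_one_div_nat_add_one_pow {m : ℕ} (hm : 1 < m) :
    Summable fun n : ℕ => 1 / ((n : ℝ) + 1) ^ m := by
  simpa using (summable_nat_add_iff 1).mpr (summable_one_div_nat_pow.mpr hm)

lemma summable_one_div_two_mul_add_one_pow {m : ℕ} (hm : 1 < m) :
    Summable fun n : ℕ => 1 / (2 * (n : ℝ) + 1) ^ m := by
  refine (summable_one_div_nat_add_one_pow hm).of_nonneg_of_le (fun n => by positivity)
    fun n => ?_
  gcongr
  linarith [n.cast_nonneg (α := ℝ)]

lemma tsum_one_div_two_mul_add_one_pow {m : ℕ} (hm : 1 < m) :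
    ∑' n : ℕ, 1 / (2 * (n : ℝ) + 1) ^ m = (1 - 1 / 2 ^ m) * zetaR m := by
  rw [zetaR_natCast]
  have h_even (n : ℕ) : 1 / (((2 * n : ℕ) : ℝ) + 1) ^ m = 1 / (2 * (n : ℝ) + 1) ^ m := by
    push_cast; rfl
  have h_odd (n : ℕ) :
      1 / (((2 * n + 1 : ℕ) : ℝ) + 1) ^ m = 1 / 2 ^ m * (1 / ((n : ℝ) + 1) ^ m) := by
    push_cast
    rw [show (2 : ℝ) * n + 1 + 1 = 2 * (n + 1) by ring, mul_pow, one_div_mul_one_div]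
  have h := tsum_even_add_odd (f := fun n : ℕ => 1 / ((n : ℝ) + 1) ^ m)
    (by simpa only [h_even] using summable_one_div_two_mul_add_one_pow hm)
    (by simpa only [h_odd] using (summable_one_div_nat_add_one_pow hm).mul_left _)
  simp only [h_even, h_odd, tsum_mul_left] at h
  linarith

lemma tsum_int_one_div_two_mul_add_one_pow {m : ℕ} (hm : 1 < m) (hm_even : Even m) :
    ∑' j : ℤ, 1 / (2 * (j : ℝ) + 1) ^ m = 2 * ∑' n : ℕ, 1 / (2 * (n : ℝ) + 1) ^ m := by
  have h_neg (n : ℕ) :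
      1 / (2 * ((-(n + 1) : ℤ) : ℝ) + 1) ^ m = 1 / (2 * (n : ℝ) + 1) ^ m := by
    push_cast
    rw [show 2 * -((n : ℝ) + 1) + 1 = -(2 * n + 1) by ring, hm_even.neg_pow]
  have hs := summable_one_div_two_mul_add_one_pow hm
  rw [tsum_of_nat_of_neg_add_one (by simpa using hs) (by simpa only [h_neg] using hs)]
  simp only [h_neg, Int.cast_natCast]
  ring

lemma Mp_pi (p : ℕ) : Mp p π =
    4 ^ (p + 1) / π ^ (2 * (p + 1)) * ∑' j : ℤ, 1 / (2 * (j : ℝ) + 1) ^ (2 * (p + 1)) := by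
  have h (j : ℤ) : 1 / (π + 2 * j * π) ^ (2 * (p + 1)) =
      1 / π ^ (2 * (p + 1)) * (1 / (2 * (j : ℝ) + 1) ^ (2 * (p + 1))) := by
    rw [show π + 2 * j * π = π * (2 * j + 1) by ring, mul_pow, one_div_mul_one_div]
  rw [Mp, cos_pi, tsum_congr h, tsum_mul_left]
  ring

theorem Mp_values_general (p : ℕ) :
    Tendsto (Mp p) (nhdsWithin 0 {(0 : ℝ)}ᶜ) (nhds 1) ∧
    Mp p π = 2 * (2 ^ (2 * (p + 1)) - 1) * zetaR (2 * (p + 1)) / π ^ (2 * (p + 1)) := by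
  have hm : 1 < 2 * (p + 1) := by omega
  constructor
  · rw [funext (Mp_eq_tsum_pow p)]
    exact tendsto_tsum_two_mul_sin_half_div_pow hm
  · rw [Mp_pi, tsum_int_one_div_two_mul_add_one_pow hm (even_two_mul _),
      tsum_one_div_two_mul_add_one_pow hm,
      show (4 : ℝ) ^ (p + 1) = 2 ^ (2 * (p + 1)) by rw [pow_mul]; norm_num]
    push_cast
    field_simp

/-- For `p ≥ 1`, `lim_{θ→0} M_p(θ) = 1` and
`M_p(π) = 2(2^{2(p+1)} - 1) ζ(2(p+1))/π^{2(p+1)}`. -/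
theorem Mp_values (p : ℕ) (hp : 1 ≤ p) :
    Tendsto (Mp p) (nhdsWithin 0 {(0 : ℝ)}ᶜ) (nhds 1) ∧
    Mp p π = 2 * (2 ^ (2 * (p + 1)) - 1) * zetaR (2 * (p + 1)) / π ^ (2 * (p + 1)) :=
  Mp_values_general p
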